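/- arXiv:1208.1476 — 6 statements merged into one kernel-verified Lean document; each statement's English description precedes it below -/
import Mathlib

section
/- In any ALBO-model I, the interpretation of an expression involving left cylindrification ᶜD can be eliminated preserving satisfiability: if Q_D is a fresh role symbol, then the pair of inclusions ¬D ⊑ ∀Q_D.⊥ and D ⊑ ¬∃¬Q_D.⊤ holds in I if and only if Q_Dᴵ = (ᶜD)ᴵ = {(x,y) ∈ Δ×Δ | x ∈ Dᴵ}. -/
namespace ALBO

/-- Role expressions of ALBO: R ::= Q | R ⊔ S | R⁻¹ | ¬R | id -/
inductive Role (Q : Type) : Type where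
  | atom : Q → Role Q
  | or : Role Q → Role Q → Role Q
  | inv : Role Q → Role Q
  | neg : Role Q → Role Q
  | id : Role Q

/-- Concept expressions of ALBO: C ::= A | {a} | ¬C | C ⊔ D | ∃R.C -/
inductive Concept (A O Q : Type) : Type where
  | atom : A → Concept A O Q
  | nominal : O → Concept A O Q
  | neg : Concept A O Q → Concept A O Q
  | or : Concept A O Q → Concept A O Q → Concept A O Q
  | ex : Role Q → Concept A O Q → Concept A O Q

/-- An ALBO model. -/
structure Model (A O Q : Type) where
  Dom : Type
  nonempty : Nonempty Dom
  ca : A → Set Dom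
  ind : O → Dom
  ra : Q → Set (Dom × Dom)

variable {A O Q : Type}

/-- Interpretation of roles. -/
def Role.interp (M : Model A O Q) : Role Q → Set (M.Dom × M.Dom)
  | .atom q => M.ra q
  | .or R S => R.interp M ∪ S.interp M
  | .inv R => {p | (p.2, p.1) ∈ R.interp M}
  | .neg R => (R.interp M)ᶜ
  | .id => {p | p.1 = p.2}

/-- Interpretation of concepts. -/
def Concept.interp (M : Model A O Q) : Concept A O Q → Set M.Dom
  | .atom a => M.ca a
  | .nominal o => {M.ind o}
  | .neg C => (C.interp M)ᶜ
  | .or C D => C.interp M ∪ D.interp M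
  | .ex R C => {x | ∃ y ∈ C.interp M, (x, y) ∈ R.interp M}


/-- Elimination of left cylindrification: for a fresh role symbol Q_D, the two
inclusions ¬D ⊑ ∀Q_D.⊥ and D ⊑ ¬∃¬Q_D.⊤ hold in a model I iff Q_D is
interpreted exactly as the left cylindrification (ᶜD)ᴵ = {(x,y) | x ∈ Dᴵ}. -/
theorem lcyl_elimination {A O Q : Type} (M : Model A O Q) (q : Q)
    (D Top Bot : Concept A O Q)
    (hTop : Concept.interp M Top = Set.univ)
    (hBot : Concept.interp M Bot = ∅) :
    (Concept.interp M (.neg D) ⊆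
        Concept.interp M (.neg (.ex (.atom q) (.neg Bot))) ∧
     Concept.interp M D ⊆
        Concept.interp M (.neg (.ex (.neg (.atom q)) Top))) ↔
      M.ra q = {p | p.1 ∈ Concept.interp M D} := by
  simp only [Concept.interp, Role.interp, hTop, hBot, Set.compl_empty]
  constructor
  · rintro ⟨h1, h2⟩
    ext ⟨x, y⟩
    simp only [Set.mem_setOf_eq]
    constructor
    · intro hxy
      by_contra hx
      exact h1 hx ⟨y, trivial, hxy⟩
    · intro hx
      by_contra hxy
      exact h2 hx ⟨y, trivial, hxy⟩
  · intro hq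
    rw [hq]
    constructor
    · intro x hx ⟨y, _, hxy⟩
      exact hx hxy
    · intro x hx ⟨y, _, hxy⟩
      exact hxy hx

end ALBO
end

section
/- Every inference rule of the tableau calculus T_ALBO is sound: for each rule with premise set X₀ and conclusion sets X₁,…,Xₘ, if an ALBO-model I validates every labelled concept in an instantiation X₀σ of the premises, then I validates all labelled concepts in Xᵢσ for at least one i ∈ {1,…,m}. In particular, for the (¬∃¬) rule: if I ⊨ a:¬∃¬R.C and I ⊨ a':{a'}, then either I ⊨ a:∃R.{a'} or I ⊨ a':¬C. -/
namespace ALBO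

variable {A O Q : Type}

/-- Soundness of the (¬∃¬) rule: if I ⊨ a:¬∃¬R.C and I ⊨ a':{a'}, then
I ⊨ a:∃R.{a'} or I ⊨ a':¬C. -/
theorem neg_ex_neg_rule_sound {A O Q : Type} (M : Model A O Q)
    (a a' : O) (R : Role Q) (C : Concept A O Q)
    (h1 : M.ind a ∈ Concept.interp M (.neg (.ex (.neg R) C)))
    (h2 : M.ind a' ∈ Concept.interp M (.nominal a')) :
    M.ind a ∈ Concept.interp M (.ex R (.nominal a')) ∨
      M.ind a' ∈ Concept.interp M (.neg C) := by
  by_cases hc : M.ind a' ∈ Concept.interp M C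
  · left
    refine ⟨M.ind a', rfl, ?_⟩
    by_contra hr
    exact h1 ⟨M.ind a', hc, hr⟩
  · exact Or.inr hc

end ALBO
end

section
/- The interpretations Qᴵ⁽ᴮ⁾ and Aᴵ⁽ᴮ⁾ of the model extracted from an open branch B are well-defined on equivalence classes: if a ∼_B b then a:A ∈ B iff b:A ∈ B; and if a ∼_B b and a' ∼_B b', then (∃ a'' ∼_B a' with a:∃Q.{a''} ∈ B) iff (∃ b'' ∼_B b' with b:∃Q.{b''} ∈ B). -/
namespace ALBO

variable {A O Q : Type}

/-- Well-definedness of the extracted interpretations on ∼_B-equivalence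
classes: if a ∼_B b then a:A ∈ B iff b:A ∈ B; and if a ∼_B b and a' ∼_B b'
then (∃ a'' ∼_B a', a:∃Q.{a''} ∈ B) iff (∃ b'' ∼_B b', b:∃Q.{b''} ∈ B). -/
theorem extracted_interp_well_defined {A O Q : Type}
    (B : Set (O × Concept A O Q))
    (hrefl : ∀ a (C : Concept A O Q), (a, C) ∈ B → (a, .nominal a) ∈ B)
    (hsym : ∀ a a', (a, Concept.nominal a') ∈ B → (a', Concept.nominal a) ∈ B)
    (hmon : ∀ a a' (C : Concept A O Q),
      (a, Concept.nominal a') ∈ B → (a', C) ∈ B → (a, C) ∈ B) :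
    (∀ (a b : O) (Aa : A), (a, Concept.nominal b) ∈ B →
      ((a, Concept.atom Aa) ∈ B ↔ (b, Concept.atom Aa) ∈ B)) ∧
    (∀ (a b a' b' : O) (q : Q), (a, Concept.nominal b) ∈ B →
      (a', Concept.nominal b') ∈ B →
      ((∃ a'', (a'', Concept.nominal a') ∈ B ∧
          (a, Concept.ex (.atom q) (.nominal a'')) ∈ B) ↔
       (∃ b'', (b'', Concept.nominal b') ∈ B ∧
          (b, Concept.ex (.atom q) (.nominal b'')) ∈ B))) := by
  constructor
  · intro a b Aa hab
    exact ⟨fun h => hmon b a _ (hsym a b hab) h, fun h => hmon a b _ hab h⟩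
  · intro a b a' b' q hab ha'b'
    constructor
    · rintro ⟨c, hc, hx⟩
      exact ⟨c, hmon c a' _ hc ha'b', hmon b a _ (hsym a b hab) hx⟩
    · rintro ⟨c, hc, hx⟩
      exact ⟨c, hmon c b' _ hc (hsym a' b' ha'b'), hmon a b _ hab hx⟩

end ALBO
end

section
/- Model existence (reflection lemma) for open branches: let B be an open, fully expanded branch of a T_ALBO tableau (closed under all rules of T_ALBO, not containing any pair a:C and a:¬C), and let I(B) be the model extracted from B via equivalence classes of ∼_B. Then for every labelled concept a:D ∈ B, ‖a‖ ∈ Dᴵ⁽ᴮ⁾; moreover for every role R: (i) a:∃R.{a'} ∈ B implies (‖a‖,‖a'‖) ∈ Rᴵ⁽ᴮ⁾, and (ii) if (‖a‖,‖a'‖) ∈ Rᴵ⁽ᴮ⁾ and a:¬∃R.D ∈ B then a':¬D ∈ B. -/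
namespace ALBO

variable {A O Q : Type}

/-- The ∼_B-equivalence class of an individual. -/
def ecl (B : Set (O × Concept A O Q)) (a : O) : Set O :=
  {a' | (a, Concept.nominal a') ∈ B}

/-- The domain of the model extracted from a branch B: the equivalence
classes ‖a‖ of individuals a with a:{a} ∈ B. -/
def EDom (B : Set (O × Concept A O Q)) : Type :=
  {S : Set O // ∃ a, (a, Concept.nominal a) ∈ B ∧ S = ecl B a}

/-- Inverse operators are pushed to atomic roles. -/
def InvNormalR : Role Q → Prop
  | .atom _ => True
  | .id => True
  | .inv (.atom _) => True
  | .inv _ => False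
  | .or R S => InvNormalR R ∧ InvNormalR S
  | .neg R => InvNormalR R

/-- All roles occurring in the concept are inverse-normal. -/
def InvNormalC : Concept A O Q → Prop
  | .atom _ => True
  | .nominal _ => True
  | .neg C => InvNormalC C
  | .or C D => InvNormalC C ∧ InvNormalC D
  | .ex R C => InvNormalR R ∧ InvNormalC C

open Classical in
/-- The model I(B) extracted from a branch B. -/
noncomputable def extractedModel (B : Set (O × Concept A O Q))
    (hne : Nonempty (EDom B)) : Model A O Q where
  Dom := EDom B
  nonempty := hne
  ca Aa := {d | ∃ a ∈ d.1, (a, Concept.atom Aa) ∈ B}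
  ind o :=
    if h : (o, Concept.nominal o) ∈ B then ⟨ecl B o, o, h, rfl⟩
    else Classical.choice hne
  ra q := {p | ∃ a a'', a ∈ p.1.1 ∧ a'' ∈ p.2.1 ∧
    (a, Concept.ex (.atom q) (.nominal a'')) ∈ B}

/-- Model existence (reflection lemma): for an open, fully expanded branch B
of a T_ALBO tableau (inverse operators pushed to atoms), the extracted model
I(B) satisfies every labelled concept of B; moreover links are reflected into
the model and negated existential role restrictions are propagated. -/
theorem reflection_lemma {A O Q : Type} (B : Set (O × Concept A O Q))
    (hne : Nonempty (EDom B))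
    (hopen : ∀ a (C : Concept A O Q), ¬((a, C) ∈ B ∧ (a, .neg C) ∈ B))
    (hnn : ∀ a (C : Concept A O Q), (a, .neg (.neg C)) ∈ B → (a, C) ∈ B)
    (hnor : ∀ a (C D : Concept A O Q), (a, .neg (.or C D)) ∈ B →
      (a, .neg C) ∈ B ∧ (a, .neg D) ∈ B)
    (hor : ∀ a (C D : Concept A O Q), (a, .or C D) ∈ B →
      (a, C) ∈ B ∨ (a, D) ∈ B)
    (hex : ∀ a (R : Role Q) (C : Concept A O Q), (a, .ex R C) ∈ B →
      ∃ a', (a, .ex R (.nominal a')) ∈ B ∧ (a', C) ∈ B)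
    (hnex : ∀ a a' (R : Role Q) (C : Concept A O Q),
      (a, .neg (.ex R C)) ∈ B → (a, .ex R (.nominal a')) ∈ B →
      (a', .neg C) ∈ B)
    (hsym : ∀ a a', (a, Concept.nominal a') ∈ B → (a', Concept.nominal a) ∈ B)
    (hnsym : ∀ a a', (a, Concept.neg (.nominal a')) ∈ B →
      (a', Concept.neg (.nominal a)) ∈ B)
    (hmon : ∀ a a' (C : Concept A O Q), (a, Concept.nominal a') ∈ B →
      (a', C) ∈ B → (a, C) ∈ B)
    (hrefl : ∀ a (C : Concept A O Q), (a, C) ∈ B → (a, .nominal a) ∈ B)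
    (hexor : ∀ a a' (R S : Role Q), (a, Concept.ex (.or R S) (.nominal a')) ∈ B →
      (a, Concept.ex R (.nominal a')) ∈ B ∨ (a, Concept.ex S (.nominal a')) ∈ B)
    (hnexor : ∀ a (R S : Role Q) (C : Concept A O Q),
      (a, Concept.neg (.ex (.or R S) C)) ∈ B →
      (a, Concept.neg (.ex R C)) ∈ B ∧ (a, Concept.neg (.ex S C)) ∈ B)
    (hexinv : ∀ a a' (R : Role Q), (a, Concept.ex (.inv R) (.nominal a')) ∈ B →
      (a', Concept.ex R (.nominal a)) ∈ B)
    (hnexinv : ∀ a a' (R : Role Q) (C : Concept A O Q),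
      (a, Concept.neg (.ex (.inv R) C)) ∈ B →
      (a', Concept.ex R (.nominal a)) ∈ B → (a', Concept.neg C) ∈ B)
    (hexneg : ∀ a a' (R : Role Q), (a, Concept.ex (.neg R) (.nominal a')) ∈ B →
      (a, Concept.neg (.ex R (.nominal a'))) ∈ B)
    (hnexneg : ∀ a a' (R : Role Q) (C : Concept A O Q),
      (a, Concept.neg (.ex (.neg R) C)) ∈ B →
      (a', Concept.nominal a') ∈ B →
      (a, Concept.ex R (.nominal a')) ∈ B ∨ (a', Concept.neg C) ∈ B)
    (hexid : ∀ a a', (a, Concept.ex .id (.nominal a')) ∈ B →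
      (a, Concept.nominal a') ∈ B)
    (hnexid : ∀ a (C : Concept A O Q), (a, Concept.neg (.ex .id C)) ∈ B →
      (a, Concept.neg C) ∈ B)
    (hinvnorm : ∀ a (C : Concept A O Q), (a, C) ∈ B → InvNormalC C) :
    (∀ a (C : Concept A O Q), (a, C) ∈ B → ∀ d : EDom B, a ∈ d.1 →
      d ∈ Concept.interp (extractedModel B hne) C) ∧
    (∀ a a' (R : Role Q), (a, Concept.ex R (.nominal a')) ∈ B →
      ∀ d d' : EDom B, a ∈ d.1 → a' ∈ d'.1 →
      (d, d') ∈ Role.interp (extractedModel B hne) R) ∧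
    (∀ a a' (R : Role Q) (D : Concept A O Q) (d d' : EDom B),
      a ∈ d.1 → a' ∈ d'.1 →
      (d, d') ∈ Role.interp (extractedModel B hne) R →
      (a, Concept.neg (.ex R D)) ∈ B → (a', Concept.neg D) ∈ B) := by
  classical
  set M := extractedModel B hne with hM
  -- basic helpers about equivalence classes
  have hsame : ∀ (d : EDom B) a b, a ∈ d.1 → b ∈ d.1 → (a, Concept.nominal b) ∈ B := by
    rintro ⟨S, c, hc, rfl⟩ a b ha hb
    exact hmon a c _ (hsym c a ha) hb
  have htrans : ∀ (d : EDom B) a b (C : Concept A O Q),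
      a ∈ d.1 → b ∈ d.1 → (a, C) ∈ B → (b, C) ∈ B :=
    fun d a b C ha hb h => hmon b a C (hsame d b a hb ha) h
  have hself : ∀ (d : EDom B) a, a ∈ d.1 → (a, Concept.nominal a) ∈ B :=
    fun d a ha => hsame d a a ha ha
  have hmove : ∀ (d : EDom B) a b, a ∈ d.1 → (a, Concept.nominal b) ∈ B → b ∈ d.1 := by
    rintro ⟨S, c, hc, rfl⟩ a b ha hab
    exact hmon c a _ ha hab
  have heq : ∀ (d d' : EDom B) a, a ∈ d.1 → a ∈ d'.1 → d = d' := by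
    rintro ⟨S, c, hc, rfl⟩ ⟨S', c', hc', rfl⟩ a ha ha'
    apply Subtype.ext
    ext x
    constructor
    · intro hx
      exact hmon c' a _ ha' (hmon a c _ (hsym c a ha) hx)
    · intro hx
      exact hmon c a _ ha (hmon a c' _ (hsym c' a ha') hx)
  -- simultaneous induction on roles
  have main23 : ∀ (R : Role Q),
      (∀ a a' (d d' : EDom B), (a, Concept.ex R (.nominal a')) ∈ B →
        a ∈ d.1 → a' ∈ d'.1 → (d, d') ∈ Role.interp M R) ∧
      (∀ a a' (D : Concept A O Q) (d d' : EDom B),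
        a ∈ d.1 → a' ∈ d'.1 → (d, d') ∈ Role.interp M R →
        (a, Concept.neg (.ex R D)) ∈ B → (a', Concept.neg D) ∈ B) := by
    intro R
    induction R with
    | atom q =>
      constructor
      · intro a a' d d' h ha ha'
        exact ⟨a, a', ha, ha', h⟩
      · intro a a' D d d' ha ha' hR hmem
        obtain ⟨b, b'', hb, hb'', hlink⟩ := hR
        have h1 : (a, Concept.ex (.atom q) (.nominal b'')) ∈ B :=
          htrans d b a _ hb ha hlink
        have h2 : (b'', Concept.neg D) ∈ B := hnex a b'' _ D hmem h1
        exact htrans d' b'' a' _ hb'' ha' h2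
    | or R S ihR ihS =>
      constructor
      · intro a a' d d' h ha ha'
        rcases hexor a a' R S h with h1 | h1
        · exact Or.inl (ihR.1 a a' d d' h1 ha ha')
        · exact Or.inr (ihS.1 a a' d d' h1 ha ha')
      · intro a a' D d d' ha ha' hR hmem
        obtain ⟨hm1, hm2⟩ := hnexor a R S D hmem
        rcases hR with h1 | h1
        · exact ihR.2 a a' D d d' ha ha' h1 hm1
        · exact ihS.2 a a' D d d' ha ha' h1 hm2
    | inv R ih =>
      constructor
      · intro a a' d d' h ha ha'
        have h1 : (a', Concept.ex R (.nominal a)) ∈ B := hexinv a a' R h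
        exact ih.1 a' a d' d h1 ha' ha
      · intro a a' D d d' ha ha' hR hmem
        have hn := hinvnorm a _ hmem
        clear ih
        cases R with
        | atom q =>
          obtain ⟨b', b'', hb', hb'', hlink⟩ := hR
          have h1 : (b'', Concept.neg (.ex (.inv (.atom q)) D)) ∈ B :=
            htrans d a b'' _ ha hb'' hmem
          have h2 : (b', Concept.neg D) ∈ B := hnexinv b'' b' (.atom q) D h1 hlink
          exact htrans d' b' a' _ hb' ha' h2
        | or R S => exact absurd hn.1 (by intro h; exact h.elim)
        | inv R => exact absurd hn.1 (by intro h; exact h.elim)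
        | neg R => exact absurd hn.1 (by intro h; exact h.elim)
        | id => exact absurd hn.1 (by intro h; exact h.elim)
    | neg R ih =>
      constructor
      · intro a a' d d' h ha ha' hR
        have h1 : (a, Concept.neg (.ex R (.nominal a'))) ∈ B := hexneg a a' R h
        have h2 : (a', Concept.neg (.nominal a')) ∈ B :=
          ih.2 a a' (.nominal a') d d' ha ha' hR h1
        exact hopen a' (.nominal a') ⟨hself d' a' ha', h2⟩
      · intro a a' D d d' ha ha' hR hmem
        rcases hnexneg a a' R D hmem (hself d' a' ha') with h1 | h1
        · exact absurd (ih.1 a a' d d' h1 ha ha') hR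
        · exact h1
    | id =>
      constructor
      · intro a a' d d' h ha ha'
        have h1 : (a, Concept.nominal a') ∈ B := hexid a a' h
        have : a' ∈ d.1 := hmove d a a' ha h1
        exact heq d d' a' this ha'
      · intro a a' D d d' ha ha' hR hmem
        have h1 : (a, Concept.neg D) ∈ B := hnexid a D hmem
        have hdd : d = d' := hR
        subst hdd
        exact htrans d a a' _ ha ha' h1
  -- simultaneous induction on concepts
  have mainPN : ∀ (C : Concept A O Q),
      (∀ a (d : EDom B), (a, C) ∈ B → a ∈ d.1 → d ∈ Concept.interp M C) ∧
      (∀ a (d : EDom B), (a, Concept.neg C) ∈ B → a ∈ d.1 →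
        d ∉ Concept.interp M C) := by
    intro C
    induction C with
    | atom Aa =>
      constructor
      · intro a d h ha
        exact ⟨a, ha, h⟩
      · intro a d h ha hd
        obtain ⟨b, hb, hbA⟩ := hd
        exact hopen a _ ⟨htrans d b a _ hb ha hbA, h⟩
    | nominal o =>
      constructor
      · intro a d h ha
        have hoa : (o, Concept.nominal a) ∈ B := hsym a o h
        have hoo : (o, Concept.nominal o) ∈ B := hrefl o _ hoa
        have hio : M.ind o = ⟨ecl B o, o, hoo, rfl⟩ := dif_pos hoo
        have hao : a ∈ (M.ind o).1 := by rw [hio]; exact hoa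
        exact (heq d (M.ind o) a ha hao)
      · intro a d h ha hd
        have hdeq : d = M.ind o := hd
        have hona : (o, Concept.neg (.nominal a)) ∈ B := hnsym a o h
        have hoo : (o, Concept.nominal o) ∈ B := hrefl o _ hona
        have hio : M.ind o = ⟨ecl B o, o, hoo, rfl⟩ := dif_pos hoo
        have hao : a ∈ ecl B o := by
          have := ha; rw [hdeq, hio] at this; exact this
        exact hopen o (.nominal a) ⟨hao, hona⟩
    | neg C ih =>
      constructor
      · intro a d h ha
        exact ih.2 a d h ha
      · intro a d h ha hd
        exact hd (ih.1 a d (hnn a C h) ha)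
    | or C D ihC ihD =>
      constructor
      · intro a d h ha
        rcases hor a C D h with h1 | h1
        · exact Or.inl (ihC.1 a d h1 ha)
        · exact Or.inr (ihD.1 a d h1 ha)
      · intro a d h ha hd
        obtain ⟨h1, h2⟩ := hnor a C D h
        rcases hd with hd | hd
        · exact ihC.2 a d h1 ha hd
        · exact ihD.2 a d h2 ha hd
    | ex R C ih =>
      constructor
      · intro a d h ha
        obtain ⟨a', hlink, hC⟩ := hex a R C h
        have ha'a' : (a', Concept.nominal a') ∈ B := hrefl a' C hC
        refine ⟨⟨ecl B a', a', ha'a', rfl⟩, ?_, ?_⟩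
        · exact ih.1 a' _ hC ha'a'
        · exact (main23 R).1 a a' d _ hlink ha ha'a'
      · intro a d h ha hd
        obtain ⟨d', hd'C, hdd'⟩ := hd
        obtain ⟨b', hb', hb'cls⟩ := d'.2
        have hb'mem : b' ∈ d'.1 := by rw [hb'cls]; exact hb'
        have h1 : (b', Concept.neg C) ∈ B :=
          (main23 R).2 a b' C d d' ha hb'mem hdd' h
        exact ih.2 b' d' h1 hb'mem hd'C
  refine ⟨?_, ?_, ?_⟩
  · intro a C h d ha
    exact (mainPN C).1 a d h ha
  · intro a a' R h d d' ha ha'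
    exact (main23 R).1 a a' d d' h ha ha'
  · intro a a' R D d d' ha ha' hR hmem
    exact (main23 R).2 a a' D d d' ha ha' hR hmem

end ALBO
end

section
/- If B is a finite open branch of a tableau for input concept C of length n with k individuals occurring in a:C, and i(B) is the total number of individuals occurring in B, then the number of labelled concepts occurring in B is at most n·i(B) + 2n·i(B)². -/
namespace ALBO

variable {A O Q : Type}

/-- Bound on the number of labelled concepts in a branch: if every labelled
concept of the finite branch B has one of the five possible forms, with
individuals drawn from the i individuals occurring in B, concepts from
sub(C) (at most n of them together with the individuals of sub(C)) and
roles from sub(C) (fewer than n of them), then B contains at most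
n·i(B) + 2n·i(B)² labelled concepts. -/
theorem branch_concept_bound {A O Q : Type} (B : Finset (O × Concept A O Q))
    (Inds : Finset O) (SC : Finset (Concept A O Q)) (SR : Finset (Role Q))
    (n i : ℕ) (hi : Inds.card = i) (hSC : SC.card ≤ n) (hSR : SR.card < n)
    (hform : ∀ p ∈ B, p.1 ∈ Inds ∧
      (p.2 ∈ SC ∨
       (∃ a' ∈ Inds, p.2 = Concept.nominal a') ∨
       (∃ a' ∈ Inds, p.2 = Concept.neg (.nominal a')) ∨
       (∃ R ∈ SR, ∃ a' ∈ Inds, p.2 = Concept.ex R (.nominal a')) ∨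
       (∃ R ∈ SR, ∃ a' ∈ Inds, p.2 = Concept.neg (.ex R (.nominal a'))))) :
    B.card ≤ n * i + 2 * n * i ^ 2 := by
  classical
  set T : Finset (O × Concept A O Q) :=
    Inds ×ˢ (SC ∪ Inds.image (fun a => Concept.nominal a)
      ∪ Inds.image (fun a => Concept.neg (.nominal a))
      ∪ (SR ×ˢ Inds).image (fun p => Concept.ex p.1 (.nominal p.2))
      ∪ (SR ×ˢ Inds).image (fun p => Concept.neg (.ex p.1 (.nominal p.2)))) with hT
  have hsub : B ⊆ T := by
    intro p hp
    obtain ⟨h1, h2⟩ := hform p hp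
    simp only [hT, Finset.mem_product, Finset.mem_union, Finset.mem_image,
      Finset.mem_product]
    refine ⟨h1, ?_⟩
    rcases h2 with h | ⟨a, ha, he⟩ | ⟨a, ha, he⟩ | ⟨R, hR, a, ha, he⟩ | ⟨R, hR, a, ha, he⟩
    · tauto
    · exact Or.inl (Or.inl (Or.inl (Or.inr ⟨a, ha, he.symm⟩)))
    · exact Or.inl (Or.inl (Or.inr ⟨a, ha, he.symm⟩))
    · exact Or.inl (Or.inr ⟨(R, a), ⟨hR, ha⟩, he.symm⟩)
    · exact Or.inr ⟨(R, a), ⟨hR, ha⟩, he.symm⟩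
  have hcard : T.card ≤ i * (n + i + i + SR.card * i + SR.card * i) := by
    rw [hT, Finset.card_product, hi]
    refine Nat.mul_le_mul_left i ?_
    calc _ ≤ SC.card + Inds.card + Inds.card + (SR ×ˢ Inds).card
            + (SR ×ˢ Inds).card := by
          refine le_trans (Finset.card_union_le _ _) ?_
          refine Nat.add_le_add ?_ (Finset.card_image_le)
          refine le_trans (Finset.card_union_le _ _) ?_
          refine Nat.add_le_add ?_ (Finset.card_image_le)
          refine le_trans (Finset.card_union_le _ _) ?_
          refine Nat.add_le_add ?_ (Finset.card_image_le)
          refine le_trans (Finset.card_union_le _ _) ?_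
          exact Nat.add_le_add le_rfl Finset.card_image_le
      _ ≤ _ := by
          rw [Finset.card_product, hi]
          omega
  have := le_trans (Finset.card_le_card hsub) hcard
  have hSR' : SR.card + 1 ≤ n := hSR
  nlinarith [sq_nonneg i]

end ALBO
end

section
/- Surjection onto the extracted model: suppose a satisfiable concept C has model I, and B is the open branch of the T_ALBO(ub) tableau constructed by following I (choosing at each branching the alternative validated by an extension J of I interpreting the new individuals). Then the map f : Δᴶ → Δᴵ⁽ᴮ⁾ sending w to ‖a‖ whenever w = aᴶ for some individual a in B (arbitrary otherwise) is well-defined and surjective; consequently Card(Δᴵ⁽ᴮ⁾) ≤ Card(Δᴵ). -/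
namespace ALBO

variable {A O Q : Type}

/-- Surjection onto the extracted model: given a model J following which the
open branch B was constructed (so that individuals of B interpreted equally
in J are identified in B), the map sending w = aᴶ to ‖a‖ is well-defined and
surjective onto the domain of the extracted model; hence
Card(Δᴵ⁽ᴮ⁾) ≤ Card(Δᴶ). -/
theorem extracted_model_surjection {A O Q : Type} (J : Model A O Q)
    (B : Set (O × Concept A O Q)) (hne : Nonempty (EDom B))
    (hrefl : ∀ a (C : Concept A O Q), (a, C) ∈ B → (a, .nominal a) ∈ B)
    (hsym : ∀ a a', (a, Concept.nominal a') ∈ B → (a', Concept.nominal a) ∈ B)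
    (hmon : ∀ a a' (C : Concept A O Q), (a, Concept.nominal a') ∈ B →
      (a', C) ∈ B → (a, C) ∈ B)
    (hJ : ∀ a a', (∃ C, (a, C) ∈ B) → (∃ C', (a', C') ∈ B) →
      J.ind a = J.ind a' → (a, Concept.nominal a') ∈ B) :
    ∃ f : J.Dom → EDom B,
      (∀ a (h : (a, Concept.nominal a) ∈ B),
        f (J.ind a) = ⟨ecl B a, a, h, rfl⟩) ∧
      Function.Surjective f ∧
      Cardinal.mk (EDom B) ≤ Cardinal.mk J.Dom := by
  classical
  have ecl_eq : ∀ a a', (a, Concept.nominal a') ∈ B → ecl B a = ecl B a' := by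
    intro a a' h
    ext x
    constructor
    · intro hx
      exact hmon a' a _ (hsym a a' h) hx
    · intro hx
      exact hmon a a' _ h hx
  let P : J.Dom → Prop := fun w => ∃ a, (a, Concept.nominal a) ∈ B ∧ J.ind a = w
  let f : J.Dom → EDom B := fun w =>
    if h : P w then
      ⟨ecl B h.choose, h.choose, h.choose_spec.1, rfl⟩
    else hne.some
  refine ⟨f, ?_, ?_, ?_⟩
  · intro a ha
    have hP : P (J.ind a) := ⟨a, ha, rfl⟩
    show dite _ _ _ = _
    refine (dif_pos hP).trans ?_
    have hb := hP.choose_spec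
    apply Subtype.ext
    exact ecl_eq _ _ (hJ _ _ ⟨_, hb.1⟩ ⟨_, ha⟩ hb.2)
  · rintro ⟨S, a, ha, rfl⟩
    refine ⟨J.ind a, ?_⟩
    have hP : P (J.ind a) := ⟨a, ha, rfl⟩
    show dite _ _ _ = _
    refine (dif_pos hP).trans ?_
    have hb := hP.choose_spec
    apply Subtype.ext
    exact ecl_eq _ _ (hJ _ _ ⟨_, hb.1⟩ ⟨_, ha⟩ hb.2)
  · have : Function.Surjective f := by
      rintro ⟨S, a, ha, rfl⟩
      refine ⟨J.ind a, ?_⟩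
      have hP : P (J.ind a) := ⟨a, ha, rfl⟩
      show dite _ _ _ = _
      refine (dif_pos hP).trans ?_
      have hb := hP.choose_spec
      apply Subtype.ext
      exact ecl_eq _ _ (hJ _ _ ⟨_, hb.1⟩ ⟨_, ha⟩ hb.2)
    exact Cardinal.mk_le_of_surjective this


end ALBO
end
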